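/- arXiv:1201.5880 — 2 statements merged into one kernel-verified Lean document; each statement's English description precedes it below -/
import Mathlib

section
/- Let K be a field, let m ≥ 1 and 1 ≤ k ≤ m be integers with k invertible in K, and let s ∈ K with s ≠ 0. Define W : (K^×)^{m+1} → K by W(z) = z₁ + ⋯ + z_m + s·z₁^{-1}⋯z_m^{-1}·z_{m+1}^k + z_{m+1}. Then z is a critical point of W (all formal partial derivatives vanish) if and only if there exists w ∈ K^× with w^{1+m−k} = (−k)^k·s and z = (w, …, w, −k·w); moreover at such a critical point W(z) = (1+m−k)·w. -/
theorem stmt_9 (K : Type*) [Field K] (m k : ℕ) (hm : 1 ≤ m) (hk1 : 1 ≤ k)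
    (hkm : k ≤ m) (hkK : (k : K) ≠ 0) (s : K) (hs : s ≠ 0)
    (z : Fin m → K) (y : K) (hz : ∀ i, z i ≠ 0) (hy : y ≠ 0) :
    ((∀ i, 1 - s * (z i)⁻¹ * (∏ j, z j)⁻¹ * y ^ k = 0) ∧
      (k : K) * s * (∏ j, z j)⁻¹ * y ^ (k - 1) + 1 = 0) ↔
    ∃ w : K, w ≠ 0 ∧ w ^ (1 + m - k) = (-(k : K)) ^ k * s ∧ (∀ i, z i = w) ∧
      y = -(k : K) * w ∧
      (∑ i, z i) + s * (∏ i, z i)⁻¹ * y ^ k + y = ((1 + m - k : ℕ) : K) * w := by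
  have hP : (∏ j, z j) ≠ 0 := Finset.prod_ne_zero_iff.mpr (fun i _ => hz i)
  have i0 : Fin m := ⟨0, hm⟩
  have hcast : ((1 + m - k : ℕ) : K) = 1 + (m : K) - (k : K) := by
    rw [Nat.cast_sub (by omega)]; push_cast; ring
  have hyk : y ^ k = y ^ (k - 1) * y := by
    rw [← pow_succ, Nat.sub_add_cancel hk1]
  have hpowadd : 1 + m - k + k = m + 1 := by omega
  have hkneg : (k : K) * (-(k : K)) ^ (k - 1) = -(-(k : K)) ^ k := by
    have h : (-(k : K)) ^ k = (-(k : K)) ^ (k - 1) * (-(k : K)) := by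
      rw [← pow_succ, Nat.sub_add_cancel hk1]
    rw [h]; ring
  constructor
  · rintro ⟨h1, h2⟩
    set P := ∏ j, z j with hPdef
    have hw0 : ∀ i, z i * P = s * y ^ k := by
      intro i
      have hb := h1 i
      field_simp [hz i, hP] at hb
      linear_combination hb
    have hzw : ∀ i, z i = z i0 :=
      fun i => mul_right_cancel₀ hP ((hw0 i).trans (hw0 i0).symm)
    set w := z i0 with hwdef
    have hw : w ≠ 0 := hz i0
    have hPw : P = w ^ m := by
      rw [hPdef]; simp [fun i => hzw i, Finset.prod_const]
    have hKey : w * w ^ m = s * y ^ k := by rw [← hPw]; exact hw0 i0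
    have h2' : (k : K) * s * y ^ (k - 1) + w ^ m = 0 := by
      have hc := h2
      field_simp [hP] at hc
      rw [hPw] at hc
      linear_combination hc
    have hyw : y = -(k : K) * w := by
      have hcan : y * w ^ m = (-(k : K) * w) * w ^ m := by
        rw [hyk] at hKey
        linear_combination y * h2' + (k:K) * hKey
      exact mul_right_cancel₀ (pow_ne_zero m hw) hcan
    have hwk : w ^ (1 + m - k) = (-(k : K)) ^ k * s := by
      have hcancel : w ^ (1 + m - k) * w ^ k = ((-(k : K)) ^ k * s) * w ^ k := by
        rw [← pow_add, hpowadd, pow_succ]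
        rw [hyw, mul_pow] at hKey
        linear_combination hKey
      exact mul_right_cancel₀ (pow_ne_zero k hw) hcancel
    refine ⟨w, hw, hwk, hzw, hyw, ?_⟩
    have hsum : ∑ i, z i = (m : K) * w := by
      simp [fun i => hzw i, Finset.sum_const, nsmul_eq_mul]
    have hmid : s * P⁻¹ * y ^ k = w := by
      rw [hPw]
      field_simp
      linear_combination -hKey
    rw [hsum, hmid, hyw, hcast]
    ring
  · rintro ⟨w, hw, hwk, hzw, hyw, hval⟩
    have hPw : (∏ j, z j) = w ^ m := by
      simp [fun i => hzw i, Finset.prod_const]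
    have hswk : s * ((-(k : K)) ^ k * w ^ k) = w * w ^ m := by
      have : w ^ (m + 1) = w ^ (1 + m - k) * w ^ k := by
        rw [← pow_add, hpowadd]
      rw [hwk] at this
      rw [pow_succ] at this
      linear_combination -this
    constructor
    · intro i
      rw [hzw i, hPw, hyw, mul_pow]
      field_simp
      linear_combination -hswk
    · rw [hPw, hyw, mul_pow]
      have hwm : (k : K) * s * ((-(k : K)) ^ (k - 1) * w ^ (k - 1)) = -w ^ m := by
        have hmm : w ^ (1 + m - k) * w ^ (k - 1) = w ^ m := by
          rw [← pow_add]; congr 1; omega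
        calc (k : K) * s * ((-(k : K)) ^ (k - 1) * w ^ (k - 1))
            = ((k : K) * (-(k : K)) ^ (k - 1)) * s * w ^ (k - 1) := by ring
          _ = -(-(k : K)) ^ k * s * w ^ (k - 1) := by rw [hkneg]
          _ = -(w ^ (1 + m - k) * w ^ (k - 1)) := by rw [hwk]; ring
          _ = -w ^ m := by rw [hmm]
      field_simp
      linear_combination hwm
end

section
/- Let K be a field, T ∈ K with T ≠ 0, and m ≥ 1. Let L = K[z₁^{±1},…,z_m^{±1}] be the Laurent polynomial ring and W = z₁ + ⋯ + z_m + T·z₁^{-1}⋯z_m^{-1}. Then the Jacobian ring Jac(W) = L/(∂W/∂z₁, …, ∂W/∂z_m) is isomorphic as a K-algebra to K[w]/(w^{m+1} − T), via the map sending each z_i to the class of w. -/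
/-!
In the Jacobian ring the relation `∂W/∂zᵢ = 0` reads `zᵢ = T·(z₁⋯z_m)⁻¹`, so all `zᵢ` equal
`w := T·(z₁⋯z_m)⁻¹`; multiplying the equalities `zⱼ = w` gives `w^m = z₁⋯z_m`, hence
`w^(m+1) = T`. Conversely, as `T` is a unit, so is the root `x` of `X^(m+1) - T`, and
`z^v ↦ x^(v₁+⋯+v_m)` kills the relations. The two resulting maps are inverse to each other
because the two rings are generated by `w` and by `x`.
-/

open Polynomial

/-- The Laurent polynomial ring `K[z₁^{±1},…,z_m^{±1}]`. -/
abbrev stmt10L (K : Type*) [Field K] (m : ℕ) : Type _ :=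
  AddMonoidAlgebra K (Fin m →₀ ℤ)

/-- The monomial `z^v` in the Laurent polynomial ring. -/
noncomputable def stmt10mono (K : Type*) [Field K] (m : ℕ) (v : Fin m →₀ ℤ) :
    stmt10L K m :=
  AddMonoidAlgebra.single v 1

open AddMonoidAlgebra

noncomputable section

namespace LaurentJacobian

variable {R : Type*} [CommRing R]

section EvalDiag

variable {ι S : Type*} [CommRing S] [Algebra R S]

def evalDiag (u : Sˣ) : AddMonoidAlgebra R (ι →₀ ℤ) →ₐ[R] S :=
  AddMonoidAlgebra.lift R S _
    ((Units.coeHom S).comp ((zpowersHom Sˣ u).comp (AddMonoidHom.toMultiplicative Finsupp.degree)))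

lemma evalDiag_single (u : Sˣ) (v : ι →₀ ℤ) :
    evalDiag u (single v 1 : AddMonoidAlgebra R (ι →₀ ℤ)) = ((u ^ v.degree : Sˣ) : S) := by
  simp [evalDiag, AddMonoidAlgebra.lift_single]

end EvalDiag

lemma degree_sum_single_one {ι : Type*} [Fintype ι] :
    (∑ j : ι, Finsupp.single j (1 : ℤ)).degree = Fintype.card ι := by
  simp

variable (T : R) (m : ℕ)

variable (R) in
def jacobianIdeal : Ideal (AddMonoidAlgebra R (Fin m →₀ ℤ)) :=
  Ideal.span (Set.range fun i : Fin m =>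
    1 - algebraMap R _ T * single (-(Finsupp.single i 1) - ∑ j, Finsupp.single j 1) 1)

abbrev JacobianRing := AddMonoidAlgebra R (Fin m →₀ ℤ) ⧸ jacobianIdeal R T m

def jacobianGen : JacobianRing T m :=
  algebraMap R _ T * Ideal.Quotient.mk _ (single (-∑ j, Finsupp.single j 1) 1)

lemma mk_single_mul_single (v w : Fin m →₀ ℤ) :
    (Ideal.Quotient.mk (jacobianIdeal R T m) (single v 1)) * Ideal.Quotient.mk _ (single w 1) =
      Ideal.Quotient.mk _ (single (v + w) 1) := by
  rw [← map_mul, single_mul_single, mul_one]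

lemma mk_single_single (i : Fin m) :
    Ideal.Quotient.mk (jacobianIdeal R T m) (single (Finsupp.single i 1) 1) = jacobianGen T m := by
  have hrel : algebraMap R (JacobianRing T m) T *
      Ideal.Quotient.mk _ (single (-(Finsupp.single i 1) - ∑ j, Finsupp.single j 1) 1) = 1 := by
    have := Ideal.Quotient.eq_zero_iff_mem.2 (Ideal.subset_span ⟨i, rfl⟩ :
      _ ∈ jacobianIdeal R T m)
    rwa [map_sub, map_one, map_mul, sub_eq_zero, eq_comm] at this
  calc _ = Ideal.Quotient.mk (jacobianIdeal R T m) (single (Finsupp.single i 1) 1) *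
        (algebraMap R (JacobianRing T m) T *
          Ideal.Quotient.mk _ (single (-(Finsupp.single i 1) - ∑ j, Finsupp.single j 1) 1)) := by
        rw [hrel, mul_one]
    _ = jacobianGen T m := by
        rw [mul_left_comm, mk_single_mul_single, jacobianGen]
        congr 3
        abel

lemma jacobianGen_pow : jacobianGen T m ^ (m + 1) = algebraMap R _ T := by
  have hpow : jacobianGen T m ^ m =
      Ideal.Quotient.mk (jacobianIdeal R T m) (single (∑ j, Finsupp.single j 1) 1) := by
    calc jacobianGen T m ^ m = ∏ j : Fin m, jacobianGen T m := by simp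
      _ = ∏ j : Fin m, Ideal.Quotient.mk _ (single (Finsupp.single j 1) 1) := by
        simp only [mk_single_single]
      _ = _ := by rw [← map_prod, prod_single, Finset.prod_const_one]
  rw [pow_succ, hpow, jacobianGen, mul_left_comm, mk_single_mul_single, add_neg_cancel]
  exact mul_one _

variable {T}

lemma root_pow : AdjoinRoot.root (X ^ (m + 1) - C T) ^ (m + 1) = algebraMap R _ T := by
  have h := AdjoinRoot.mk_self (f := X ^ (m + 1) - C T)
  rwa [map_sub, map_pow, AdjoinRoot.mk_X, AdjoinRoot.mk_C, sub_eq_zero] at h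

lemma isUnit_root (hT : IsUnit T) : IsUnit (AdjoinRoot.root (X ^ (m + 1) - C T)) := by
  rw [← isUnit_pow_succ_iff, root_pow]
  exact hT.map _

lemma evalDiag_jacobianIdeal {S : Type*} [CommRing S] [Algebra R S] {u : Sˣ}
    (hu : (u : S) ^ (m + 1) = algebraMap R S T) :
    jacobianIdeal R T m ≤ RingHom.ker (evalDiag u) := by
  refine Ideal.span_le.2 ?_
  rintro _ ⟨i, rfl⟩
  have hdeg : (-(Finsupp.single i 1) - ∑ j : Fin m, Finsupp.single j (1 : ℤ)).degree =
      -((m + 1 : ℕ) : ℤ) := by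
    simp only [map_sub, map_neg, Finsupp.degree_single, degree_sum_single_one, Fintype.card_fin]
    push_cast
    ring
  simp only [SetLike.mem_coe, RingHom.mem_ker, map_sub, map_one, map_mul, AlgHom.commutes,
    evalDiag_single, hdeg, zpow_neg, zpow_natCast, ← hu]
  rw [← Units.val_pow_eq_pow_val, Units.mul_inv, sub_self]

def rootUnit (hT : IsUnit T) : (AdjoinRoot (X ^ (m + 1) - C T))ˣ :=
  (isUnit_root m hT).unit

lemma val_rootUnit (hT : IsUnit T) :
    (rootUnit m hT : AdjoinRoot (X ^ (m + 1) - C T)) = AdjoinRoot.root _ :=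
  IsUnit.unit_spec _

def jacobianToAdjoinRoot (hT : IsUnit T) :
    JacobianRing T m →ₐ[R] AdjoinRoot (X ^ (m + 1) - C T) :=
  Ideal.Quotient.liftₐ _ (evalDiag (rootUnit m hT)) fun _ ha =>
    evalDiag_jacobianIdeal m (by rw [val_rootUnit, root_pow]) ha

lemma jacobianToAdjoinRoot_mk_single (hT : IsUnit T) (v : Fin m →₀ ℤ) :
    jacobianToAdjoinRoot m hT (Ideal.Quotient.mk _ (single v 1)) =
      ((rootUnit m hT ^ v.degree : _ˣ) : AdjoinRoot (X ^ (m + 1) - C T)) :=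
  evalDiag_single _ v

lemma jacobianToAdjoinRoot_mk_single_single (hT : IsUnit T) (i : Fin m) :
    jacobianToAdjoinRoot m hT (Ideal.Quotient.mk _ (single (Finsupp.single i 1) 1)) =
      AdjoinRoot.root _ := by
  rw [jacobianToAdjoinRoot_mk_single, Finsupp.degree_single, zpow_one, val_rootUnit]

lemma jacobianToAdjoinRoot_jacobianGen (hT : IsUnit T) :
    jacobianToAdjoinRoot m hT (jacobianGen T m) = AdjoinRoot.root _ := by
  rw [jacobianGen, map_mul, AlgHom.commutes, jacobianToAdjoinRoot_mk_single, map_neg,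
    degree_sum_single_one, Fintype.card_fin, ← root_pow, ← val_rootUnit m hT,
    ← Units.val_pow_eq_pow_val, ← Units.val_mul, ← zpow_natCast, ← zpow_add]
  norm_num

def adjoinRootToJacobian : AdjoinRoot (X ^ (m + 1) - C T) →ₐ[R] JacobianRing T m :=
  AdjoinRoot.liftAlgHom _ (Algebra.ofId R _) (jacobianGen T m) <| by
    simp [jacobianGen_pow]

lemma adjoinRootToJacobian_root :
    adjoinRootToJacobian m (AdjoinRoot.root (X ^ (m + 1) - C T)) = jacobianGen T m :=
  AdjoinRoot.liftAlgHom_root ..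

lemma jacobianToAdjoinRoot_comp_adjoinRootToJacobian (hT : IsUnit T) :
    (jacobianToAdjoinRoot m hT).comp (adjoinRootToJacobian m) = AlgHom.id R _ :=
  AdjoinRoot.algHom_ext <| by
    rw [AlgHom.comp_apply, adjoinRootToJacobian_root, jacobianToAdjoinRoot_jacobianGen,
      AlgHom.id_apply]

lemma adjoinRootToJacobian_comp_jacobianToAdjoinRoot (hT : IsUnit T) :
    (adjoinRootToJacobian m).comp (jacobianToAdjoinRoot m hT) = AlgHom.id R _ := by
  refine Ideal.Quotient.algHom_ext R (AddMonoidAlgebra.algHom_ext'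
    (Finsupp.mulHom_ext' fun i => MonoidHom.ext_mint ?_) (Subsingleton.elim _ _))
  simp only [AlgHom.coe_comp, MonoidHom.coe_comp, MonoidHom.coe_coe, Function.comp_apply,
    AddMonoidHom.toMultiplicative_apply_apply, toAdd_ofAdd, Finsupp.singleAddHom_apply,
    of_apply, Ideal.Quotient.mkₐ_eq_mk, AlgHom.id_apply]
  rw [jacobianToAdjoinRoot_mk_single_single, adjoinRootToJacobian_root, mk_single_single]

def jacobianEquiv (hT : IsUnit T) : JacobianRing T m ≃ₐ[R] AdjoinRoot (X ^ (m + 1) - C T) :=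
  AlgEquiv.ofAlgHom (jacobianToAdjoinRoot m hT) (adjoinRootToJacobian m)
    (jacobianToAdjoinRoot_comp_adjoinRootToJacobian m hT)
    (adjoinRootToJacobian_comp_jacobianToAdjoinRoot m hT)

lemma jacobianEquiv_mk_single (hT : IsUnit T) (i : Fin m) :
    jacobianEquiv m hT (Ideal.Quotient.mk _ (single (Finsupp.single i 1) 1)) =
      AdjoinRoot.root _ :=
  jacobianToAdjoinRoot_mk_single_single m hT i

end LaurentJacobian

end

theorem stmt_10_general (K : Type*) [Field K] (T : K) (hT : T ≠ 0) (m : ℕ) :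
    ∃ e : (stmt10L K m ⧸ Ideal.span (Set.range (fun i : Fin m =>
          (1 : stmt10L K m) -
            (algebraMap K (stmt10L K m) T) *
              stmt10mono K m (-(Finsupp.single i 1) - ∑ j, Finsupp.single j 1))))
        ≃ₐ[K] (K[X] ⧸ Ideal.span {(X : K[X]) ^ (m + 1) - C T}),
      ∀ i : Fin m,
        e (Ideal.Quotient.mk _ (stmt10mono K m (Finsupp.single i 1))) =
          Ideal.Quotient.mk _ X :=
  ⟨LaurentJacobian.jacobianEquiv m hT.isUnit,
    LaurentJacobian.jacobianEquiv_mk_single m hT.isUnit⟩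

theorem stmt_10 (K : Type*) [Field K] (T : K) (hT : T ≠ 0) (m : ℕ) (hm : 1 ≤ m) :
    ∃ e : (stmt10L K m ⧸ Ideal.span (Set.range (fun i : Fin m =>
          (1 : stmt10L K m) -
            (algebraMap K (stmt10L K m) T) *
              stmt10mono K m (-(Finsupp.single i 1) - ∑ j, Finsupp.single j 1))))
        ≃ₐ[K] (K[X] ⧸ Ideal.span {(X : K[X]) ^ (m + 1) - C T}),
      ∀ i : Fin m,
        e (Ideal.Quotient.mk _ (stmt10mono K m (Finsupp.single i 1))) =
          Ideal.Quotient.mk _ X :=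
  stmt_10_general K T hT m
end
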